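/- Let c > 0 be real and let j denote the imaginary unit. Define k : ℝ² → ℂ by the everywhere absolutely convergent power series k(x,y) := −(c j x / 2) · Σ_{n=0}^∞ (c j (x² − y²) / 4)ⁿ / (n! (n+1)!). Then k is smooth and satisfies, on the triangle T = {(x,y) ∈ ℝ² : 0 ≤ y ≤ x ≤ 1}: (i) the complex-valued kernel PDE k_xx(x,y) − k_yy(x,y) = c j · k(x,y); (ii) the boundary condition k_y(x,0) = 0 for all x ∈ [0,1]; and (iii) the diagonal condition k(x,x) = −(c j / 2) x for all x ∈ [0,1]. (This series equals the closed-form kernel −c j x · I₁(√(c j (x² − y²)))/√(c j (x² − y²)) expressed through the first-order modified Bessel function of the first kind with complex argument.) -/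

import Mathlib

open Set Complex

/-- The triangular domain `T = {(x,y) : 0 ≤ y ≤ x ≤ 1}`. -/
def Tri : Set (ℝ × ℝ) := {p | 0 ≤ p.2 ∧ p.2 ≤ p.1 ∧ p.1 ≤ 1}

/-- The complex-valued closed-form backstepping kernel for the linearized Schrödinger equation:
`k(x,y) = −(c j x/2) Σₙ (c j (x²−y²)/4)ⁿ/(n!(n+1)!)`, i.e.
`k(x,y) = −c j x I₁(√(c j(x²−y²)))/√(c j(x²−y²))` through the first-order modified Bessel
function of the first kind with complex argument (`j` is the imaginary unit). -/
noncomputable def schrodingerKernel (c : ℝ) (x y : ℝ) : ℂ :=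
  -((c : ℂ) * Complex.I * (x : ℂ) / 2) *
    ∑' n : ℕ, ((c : ℂ) * Complex.I * ((x : ℂ) ^ 2 - (y : ℂ) ^ 2) / 4) ^ n /
      ((n.factorial : ℂ) * ((n + 1).factorial : ℂ))

/-! Auxiliary power series machinery. -/

noncomputable def bb (m n : ℕ) : ℂ := 1 / ((n.factorial : ℂ) * ((n + m).factorial : ℂ))

noncomputable def gg (m : ℕ) (w : ℂ) : ℂ := ∑' n : ℕ, bb m n * w ^ n

lemma bb_norm (m n : ℕ) : ‖bb m n‖ ≤ 1 / n.factorial := by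
  have h0 : (0:ℝ) < n.factorial := by exact_mod_cast Nat.factorial_pos n
  have h1 : (1:ℝ) ≤ (n + m).factorial :=
    Nat.one_le_cast.mpr (Nat.one_le_iff_ne_zero.mpr (Nat.factorial_ne_zero _))
  have : ‖bb m n‖ = 1 / ((n.factorial : ℝ) * ((n + m).factorial : ℝ)) := by
    simp [bb]
  rw [this]
  exact one_div_le_one_div_of_le h0 (le_mul_of_one_le_right h0.le h1)

lemma summable_norm_psum {b : ℕ → ℂ} (hb : ∀ n, ‖b n‖ ≤ 1 / n.factorial) (z : ℂ) :
    Summable fun n : ℕ => ‖b n * z ^ n‖ := by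
  apply Summable.of_nonneg_of_le (fun n => norm_nonneg _) (fun n => ?_)
    (Real.summable_pow_div_factorial ‖z‖)
  rw [norm_mul, norm_pow]
  calc ‖b n‖ * ‖z‖ ^ n ≤ (1 / n.factorial) * ‖z‖ ^ n :=
        mul_le_mul_of_nonneg_right (hb n) (pow_nonneg (norm_nonneg z) n)
    _ = ‖z‖ ^ n / n.factorial := by ring

lemma summable_psum {b : ℕ → ℂ} (hb : ∀ n, ‖b n‖ ≤ 1 / n.factorial) (z : ℂ) :
    Summable fun n : ℕ => b n * z ^ n :=
  (summable_norm_psum hb z).of_norm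

lemma hb_shift {b : ℕ → ℂ} (hb : ∀ n, ‖b n‖ ≤ 1 / n.factorial) (n : ℕ) :
    ‖b (n + 1)‖ ≤ 1 / n.factorial := by
  refine (hb (n + 1)).trans ?_
  have h0 : (0:ℝ) < n.factorial := by exact_mod_cast Nat.factorial_pos n
  exact one_div_le_one_div_of_le h0 (by exact_mod_cast Nat.factorial_le (Nat.le_succ n))

lemma hasDerivAt_psum {b : ℕ → ℂ} (hb : ∀ n, ‖b n‖ ≤ 1 / n.factorial) (w : ℂ) :
    HasDerivAt (fun z : ℂ => ∑' n : ℕ, b n * z ^ n)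
      (∑' n : ℕ, ((n : ℂ) + 1) * b (n + 1) * w ^ n) w := by
  set R : ℝ := ‖w‖ + 1 with hRdef
  have hmem : w ∈ Metric.ball (0:ℂ) R := by
    rw [Metric.mem_ball, dist_zero_right]; simp [hRdef]
  have key : HasDerivAt (fun z : ℂ => ∑' n : ℕ, b (n + 1) * z ^ (n + 1))
      (∑' n : ℕ, ((n : ℂ) + 1) * b (n + 1) * w ^ n) w := by
    have hderiv : ∀ (n : ℕ), ∀ z ∈ Metric.ball (0:ℂ) R,
        HasDerivAt (fun z : ℂ => b (n + 1) * z ^ (n + 1))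
          (((n : ℂ) + 1) * b (n + 1) * z ^ n) z := by
      intro n z _
      have h := (hasDerivAt_pow (n + 1) z).const_mul (b (n + 1))
      refine h.congr_deriv ?_
      push_cast [Nat.add_sub_cancel]
      ring
    have hsum0 : Summable (fun n : ℕ => b (n + 1) * (0:ℂ) ^ (n + 1)) :=
      Summable.congr summable_zero (fun n => by simp)
    have hbound : ∀ (n : ℕ), ∀ z ∈ Metric.ball (0:ℂ) R,
        ‖((n : ℂ) + 1) * b (n + 1) * z ^ n‖ ≤ R ^ n / n.factorial := by
      intro n z hz
      rw [Metric.mem_ball, dist_zero_right] at hz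
      have hzR : ‖z‖ ≤ R := hz.le
      have hR0 : (0:ℝ) ≤ R := by positivity
      rw [norm_mul, norm_mul, norm_pow]
      have hn1 : ‖((n : ℂ) + 1)‖ = (n : ℝ) + 1 := by
        rw [show ((n : ℂ) + 1) = ((n + 1 : ℕ) : ℂ) by push_cast; ring,
          Complex.norm_natCast]
        push_cast
        ring
      rw [hn1]
      have hfact : (0:ℝ) < (n + 1).factorial := by exact_mod_cast Nat.factorial_pos _
      calc ((n:ℝ) + 1) * ‖b (n + 1)‖ * ‖z‖ ^ n
          ≤ ((n:ℝ) + 1) * (1 / (n + 1).factorial) * R ^ n := by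
            apply mul_le_mul
            · exact mul_le_mul_of_nonneg_left (hb (n + 1)) (by positivity)
            · exact pow_le_pow_left₀ (norm_nonneg z) hzR n
            · positivity
            · positivity
        _ = R ^ n / n.factorial := by
            rw [Nat.factorial_succ]
            have h0 : ((n.factorial : ℝ)) ≠ 0 := by exact_mod_cast Nat.factorial_ne_zero n
            have h1 : ((n:ℝ) + 1) ≠ 0 := by positivity
            push_cast
            field_simp
    exact hasDerivAt_tsum_of_isPreconnected (Real.summable_pow_div_factorial R)
      Metric.isOpen_ball ((convex_ball (0:ℂ) R).isPreconnected) hderiv hbound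
      (Metric.mem_ball_self (by positivity)) hsum0 hmem
  have hfe : (fun z : ℂ => ∑' n : ℕ, b n * z ^ n)
      = fun z : ℂ => b 0 + ∑' n : ℕ, b (n + 1) * z ^ (n + 1) := by
    funext z
    rw [(summable_psum hb z).tsum_eq_zero_add]
    simp
  rw [hfe]
  exact key.const_add (b 0)

lemma bb_shift (m n : ℕ) : ((n : ℂ) + 1) * bb m (n + 1) = bb (m + 1) n := by
  have hidx : n + 1 + m = n + (m + 1) := by omega
  rw [bb, bb, hidx, Nat.factorial_succ n]
  have h0 : ((n.factorial : ℂ)) ≠ 0 := by exact_mod_cast Nat.factorial_ne_zero n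
  have h1 : (((n + (m + 1)).factorial : ℂ)) ≠ 0 := by
    exact_mod_cast Nat.factorial_ne_zero _
  have h2 : ((n : ℂ) + 1) ≠ 0 := by
    exact_mod_cast Nat.cast_add_one_ne_zero (R := ℂ) n
  push_cast
  field_simp

lemma hasDerivAt_gg (m : ℕ) (w : ℂ) : HasDerivAt (gg m) (gg (m + 1) w) w := by
  have h : gg (m + 1) w = ∑' n : ℕ, ((n : ℂ) + 1) * bb m (n + 1) * w ^ n := by
    rw [gg]
    exact tsum_congr fun n => by rw [bb_shift]
  rw [show gg m = fun z => ∑' n : ℕ, bb m n * z ^ n from rfl, h]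
  exact hasDerivAt_psum (bb_norm m) w

lemma differentiable_gg (m : ℕ) : Differentiable ℂ (gg m) :=
  fun w => (hasDerivAt_gg m w).differentiableAt

lemma gg_zero (m : ℕ) : gg m 0 = bb m 0 := by
  rw [gg, tsum_eq_single 0]
  · simp
  · intro n hn; simp [zero_pow hn]

lemma coeff_ode (n : ℕ) : 2 * bb 2 (n + 1) + bb 3 n = bb 1 (n + 1) := by
  have e1 : ((n + 1) + 2) = (n + 2) + 1 := by omega
  have e2 : (n + 3) = (n + 2) + 1 := by omega
  have e3 : ((n + 1) + 1) = n + 2 := by omega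
  rw [bb, bb, bb, e1, e2, e3, Nat.factorial_succ (n + 2), Nat.factorial_succ n]
  have h0 : ((n.factorial : ℂ)) ≠ 0 := by exact_mod_cast Nat.factorial_ne_zero n
  have h1 : (((n + 2).factorial : ℂ)) ≠ 0 := by exact_mod_cast Nat.factorial_ne_zero _
  have h2 : ((n : ℂ) + 1) ≠ 0 := by exact_mod_cast Nat.cast_add_one_ne_zero (R := ℂ) n
  have h3 : ((n : ℂ) + 2 + 1) ≠ 0 := by
    have := Nat.cast_add_one_ne_zero (R := ℂ) (n + 2)
    push_cast at this
    convert this using 2 <;> ring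
  push_cast
  field_simp
  ring

lemma gg_ode (w : ℂ) : gg 1 w = 2 * gg 2 w + w * gg 3 w := by
  have s1 := summable_psum (bb_norm 1) w
  have s2 := summable_psum (bb_norm 2) w
  have s3 := summable_psum (bb_norm 3) w
  have s2s : Summable fun n : ℕ => bb 2 (n + 1) * w ^ (n + 1) := by
    refine ((summable_psum (hb_shift (bb_norm 2)) w).mul_left w).congr fun n => by ring
  have s3s : Summable fun n : ℕ => bb 3 n * w ^ (n + 1) := by
    refine (s3.mul_left w).congr fun n => by ring
  have h3 : w * gg 3 w = ∑' n : ℕ, bb 3 n * w ^ (n + 1) := by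
    rw [gg, ← tsum_mul_left]
    exact tsum_congr fun n => by ring
  have h2 : gg 2 w = bb 2 0 + ∑' n : ℕ, bb 2 (n + 1) * w ^ (n + 1) := by
    rw [gg, s2.tsum_eq_zero_add]
    norm_num
  have h1 : gg 1 w = bb 1 0 + ∑' n : ℕ, bb 1 (n + 1) * w ^ (n + 1) := by
    rw [gg, s1.tsum_eq_zero_add]
    norm_num
  rw [h1, h2, h3, mul_add, ← tsum_mul_left, add_assoc, ← Summable.tsum_add (s2s.mul_left 2) s3s]
  congr 1
  · norm_num [bb]
  · exact tsum_congr fun n => by rw [← coeff_ode n]; ring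

lemma kernel_eq (c x y : ℝ) :
    schrodingerKernel c x y =
      -((c : ℂ) * Complex.I * (x : ℂ) / 2) *
        gg 1 ((c : ℂ) * Complex.I * ((x : ℂ) ^ 2 - (y : ℂ) ^ 2) / 4) := by
  rw [schrodingerKernel, gg]
  congr 1
  exact tsum_congr fun n => by rw [bb]; ring

/-! Complex one-variable derivative computations. -/

lemma hasDerivAt_inner_x (a y x : ℂ) :
    HasDerivAt (fun z : ℂ => a * (z ^ 2 - y ^ 2) / 4) (a * x / 2) x := by
  have h := (((hasDerivAt_pow 2 x).sub_const (y ^ 2)).const_mul a).div_const 4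
  refine h.congr_deriv ?_
  push_cast
  ring

lemma hasDerivAt_inner_y (a x y : ℂ) :
    HasDerivAt (fun z : ℂ => a * (x ^ 2 - z ^ 2) / 4) (-(a * y / 2)) y := by
  have h0 : HasDerivAt (fun z : ℂ => z ^ 2) (2 * y) y := by simpa using hasDerivAt_pow 2 y
  have h := (((h0.const_mul a).div_const 4).neg).const_add (a * x ^ 2 / 4)
  have he : (fun z : ℂ => a * (x ^ 2 - z ^ 2) / 4)
      = fun z : ℂ => a * x ^ 2 / 4 + -(a * z ^ 2 / 4) := funext fun z => by ring
  rw [he]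
  refine h.congr_deriv ?_
  ring

lemma hasDerivAt_gg_comp_x (m : ℕ) (a y x : ℂ) :
    HasDerivAt (fun z : ℂ => gg m (a * (z ^ 2 - y ^ 2) / 4))
      (gg (m + 1) (a * (x ^ 2 - y ^ 2) / 4) * (a * x / 2)) x := by
  have h := (hasDerivAt_gg m (a * (x ^ 2 - y ^ 2) / 4)).comp x (hasDerivAt_inner_x a y x)
  simpa [Function.comp_def] using h

lemma hasDerivAt_gg_comp_y (m : ℕ) (a x y : ℂ) :
    HasDerivAt (fun z : ℂ => gg m (a * (x ^ 2 - z ^ 2) / 4))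
      (gg (m + 1) (a * (x ^ 2 - y ^ 2) / 4) * (-(a * y / 2))) y := by
  have h := (hasDerivAt_gg m (a * (x ^ 2 - y ^ 2) / 4)).comp y (hasDerivAt_inner_y a x y)
  simpa [Function.comp_def] using h

lemma hasDerivAt_K_x (a y x : ℂ) :
    HasDerivAt (fun z : ℂ => -(a * z / 2) * gg 1 (a * (z ^ 2 - y ^ 2) / 4))
      (-(a / 2) * gg 1 (a * (x ^ 2 - y ^ 2) / 4)
        - a ^ 2 * x ^ 2 / 4 * gg 2 (a * (x ^ 2 - y ^ 2) / 4)) x := by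
  have hlin : HasDerivAt (fun z : ℂ => -(a * z / 2)) (-(a / 2)) x := by
    have h := (((hasDerivAt_id x).const_mul a).div_const 2).neg
    refine h.congr_deriv ?_
    ring
  have h := hlin.mul (hasDerivAt_gg_comp_x 1 a y x)
  refine h.congr_deriv ?_
  ring

lemma hasDerivAt_K_xx (a y x : ℂ) :
    HasDerivAt (fun z : ℂ => -(a / 2) * gg 1 (a * (z ^ 2 - y ^ 2) / 4)
        - a ^ 2 * z ^ 2 / 4 * gg 2 (a * (z ^ 2 - y ^ 2) / 4))
      (-(3 * a ^ 2 * x / 4) * gg 2 (a * (x ^ 2 - y ^ 2) / 4)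
        - a ^ 3 * x ^ 3 / 8 * gg 3 (a * (x ^ 2 - y ^ 2) / 4)) x := by
  have h1 := (hasDerivAt_gg_comp_x 1 a y x).const_mul (-(a / 2))
  have hpoly : HasDerivAt (fun z : ℂ => a ^ 2 * z ^ 2 / 4) (a ^ 2 * x / 2) x := by
    have h := ((hasDerivAt_pow 2 x).const_mul (a ^ 2)).div_const 4
    refine h.congr_deriv ?_
    push_cast; ring
  have h2 := hpoly.mul (hasDerivAt_gg_comp_x 2 a y x)
  have h := h1.sub h2
  refine h.congr_deriv ?_
  ring

lemma hasDerivAt_K_y (a x y : ℂ) :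
    HasDerivAt (fun z : ℂ => -(a * x / 2) * gg 1 (a * (x ^ 2 - z ^ 2) / 4))
      (a ^ 2 * x * y / 4 * gg 2 (a * (x ^ 2 - y ^ 2) / 4)) y := by
  have h := (hasDerivAt_gg_comp_y 1 a x y).const_mul (-(a * x / 2))
  refine h.congr_deriv ?_
  ring

lemma hasDerivAt_K_yy (a x y : ℂ) :
    HasDerivAt (fun z : ℂ => a ^ 2 * x * z / 4 * gg 2 (a * (x ^ 2 - z ^ 2) / 4))
      (a ^ 2 * x / 4 * gg 2 (a * (x ^ 2 - y ^ 2) / 4)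
        - a ^ 3 * x * y ^ 2 / 8 * gg 3 (a * (x ^ 2 - y ^ 2) / 4)) y := by
  have hpoly : HasDerivAt (fun z : ℂ => a ^ 2 * x * z / 4) (a ^ 2 * x / 4) y := by
    have h := (((hasDerivAt_id y).const_mul (a ^ 2 * x)).div_const 4)
    refine h.congr_deriv ?_
    ring
  have h := hpoly.mul (hasDerivAt_gg_comp_y 2 a x y)
  refine h.congr_deriv ?_
  ring

/-- The explicit complex Bessel-series kernel solves the Schrödinger backstepping kernel
equations `k_xx − k_yy = c j k`, `k_y(x,0) = 0`, `k(x,x) = −(c j/2) x` on the triangle `T`. -/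
theorem schrodingerKernel_solves_kernel_equations (c : ℝ) (hc : 0 < c) :
    (∀ x y : ℝ, Summable (fun n : ℕ =>
      ‖((c : ℂ) * Complex.I * ((x : ℂ) ^ 2 - (y : ℂ) ^ 2) / 4) ^ n /
        ((n.factorial : ℂ) * ((n + 1).factorial : ℂ))‖)) ∧
    ContDiff ℝ (⊤ : ℕ∞) (fun p : ℝ × ℝ => schrodingerKernel c p.1 p.2) ∧
    (∀ x y : ℝ, (x, y) ∈ Tri →
      deriv (fun z => deriv (fun z' => schrodingerKernel c z' y) z) x -
        deriv (fun z => deriv (fun z' => schrodingerKernel c x z') z) y =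
          (c : ℂ) * Complex.I * schrodingerKernel c x y) ∧
    (∀ x ∈ Icc (0:ℝ) 1, deriv (fun z => schrodingerKernel c x z) 0 = 0) ∧
    (∀ x ∈ Icc (0:ℝ) 1, schrodingerKernel c x x = -((c : ℂ) * Complex.I / 2) * (x : ℂ)) := by
  set a : ℂ := (c : ℂ) * Complex.I with ha
  refine ⟨?_, ?_, ?_, ?_, ?_⟩
  · -- summability
    intro x y
    refine (summable_norm_psum (bb_norm 1)
      ((c : ℂ) * Complex.I * ((x : ℂ) ^ 2 - (y : ℂ) ^ 2) / 4)).congr fun n => ?_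
    congr 1
    rw [bb]; ring
  · -- smoothness (real-analyticity)
    have hfun : (fun p : ℝ × ℝ => schrodingerKernel c p.1 p.2)
        = fun p : ℝ × ℝ => (-(a / 2) * ((p.1 : ℂ)))
            * gg 1 (a * (((p.1 : ℂ)) ^ 2 - ((p.2 : ℂ)) ^ 2) / 4) := by
      funext p
      rw [kernel_eq, ← ha]
      ring
    rw [hfun]
    apply AnalyticOnNhd.contDiff
    intro p _
    have hre1 : AnalyticAt ℝ (fun p : ℝ × ℝ => ((p.1 : ℂ))) p :=
      (Complex.ofRealCLM.comp (ContinuousLinearMap.fst ℝ ℝ ℝ)).analyticAt p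
    have hre2 : AnalyticAt ℝ (fun p : ℝ × ℝ => ((p.2 : ℂ))) p :=
      (Complex.ofRealCLM.comp (ContinuousLinearMap.snd ℝ ℝ ℝ)).analyticAt p
    have hinner : AnalyticAt ℝ
        (fun p : ℝ × ℝ => a * (((p.1 : ℂ)) ^ 2 - ((p.2 : ℂ)) ^ 2) / 4) p := by
      have h : AnalyticAt ℝ
          (fun p : ℝ × ℝ => (a / 4) * (((p.1 : ℂ)) ^ 2 - ((p.2 : ℂ)) ^ 2)) p :=
        analyticAt_const.mul ((hre1.pow 2).sub (hre2.pow 2))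
      have heq : (fun p : ℝ × ℝ => (a / 4) * (((p.1 : ℂ)) ^ 2 - ((p.2 : ℂ)) ^ 2))
          = fun p : ℝ × ℝ => a * (((p.1 : ℂ)) ^ 2 - ((p.2 : ℂ)) ^ 2) / 4 :=
        funext fun q => by ring
      exact heq ▸ h
    have hgg : AnalyticAt ℝ (gg 1) (a * (((p.1 : ℂ)) ^ 2 - ((p.2 : ℂ)) ^ 2) / 4) :=
      ((differentiable_gg 1).analyticAt _).restrictScalars
    have hcomp := AnalyticAt.comp (g := gg 1)
      (f := fun p : ℝ × ℝ => a * (((p.1 : ℂ)) ^ 2 - ((p.2 : ℂ)) ^ 2) / 4) hgg hinner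
    exact (analyticAt_const.mul hre1).mul hcomp
  · -- the PDE
    intro x y _
    have hdx : ∀ z : ℝ, deriv (fun z' : ℝ => schrodingerKernel c z' y) z
        = -(a / 2) * gg 1 (a * ((z : ℂ) ^ 2 - (y : ℂ) ^ 2) / 4)
          - a ^ 2 * (z : ℂ) ^ 2 / 4 * gg 2 (a * ((z : ℂ) ^ 2 - (y : ℂ) ^ 2) / 4) := by
      intro z
      have he : (fun z' : ℝ => schrodingerKernel c z' y)
          = fun z' : ℝ => -(a * (z' : ℂ) / 2) * gg 1 (a * ((z' : ℂ) ^ 2 - (y : ℂ) ^ 2) / 4) :=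
        funext fun z' => kernel_eq c z' y
      rw [he]
      exact ((hasDerivAt_K_x a (y : ℂ) (z : ℂ)).comp_ofReal).deriv
    have hdy : ∀ z : ℝ, deriv (fun z' : ℝ => schrodingerKernel c x z') z
        = a ^ 2 * (x : ℂ) * (z : ℂ) / 4 * gg 2 (a * ((x : ℂ) ^ 2 - (z : ℂ) ^ 2) / 4) := by
      intro z
      have he : (fun z' : ℝ => schrodingerKernel c x z')
          = fun z' : ℝ => -(a * (x : ℂ) / 2) * gg 1 (a * ((x : ℂ) ^ 2 - (z' : ℂ) ^ 2) / 4) :=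
        funext fun z' => kernel_eq c x z'
      rw [he]
      exact ((hasDerivAt_K_y a (x : ℂ) (z : ℂ)).comp_ofReal).deriv
    have hxx : deriv (fun z => deriv (fun z' => schrodingerKernel c z' y) z) x
        = -(3 * a ^ 2 * (x : ℂ) / 4) * gg 2 (a * ((x : ℂ) ^ 2 - (y : ℂ) ^ 2) / 4)
          - a ^ 3 * (x : ℂ) ^ 3 / 8 * gg 3 (a * ((x : ℂ) ^ 2 - (y : ℂ) ^ 2) / 4) := by
      have he : (fun z : ℝ => deriv (fun z' => schrodingerKernel c z' y) z)
          = fun z : ℝ => -(a / 2) * gg 1 (a * ((z : ℂ) ^ 2 - (y : ℂ) ^ 2) / 4)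
            - a ^ 2 * (z : ℂ) ^ 2 / 4 * gg 2 (a * ((z : ℂ) ^ 2 - (y : ℂ) ^ 2) / 4) :=
        funext hdx
      rw [he]
      exact ((hasDerivAt_K_xx a (y : ℂ) (x : ℂ)).comp_ofReal).deriv
    have hyy : deriv (fun z => deriv (fun z' => schrodingerKernel c x z') z) y
        = a ^ 2 * (x : ℂ) / 4 * gg 2 (a * ((x : ℂ) ^ 2 - (y : ℂ) ^ 2) / 4)
          - a ^ 3 * (x : ℂ) * (y : ℂ) ^ 2 / 8 * gg 3 (a * ((x : ℂ) ^ 2 - (y : ℂ) ^ 2) / 4) := by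
      have he : (fun z : ℝ => deriv (fun z' => schrodingerKernel c x z') z)
          = fun z : ℝ => a ^ 2 * (x : ℂ) * (z : ℂ) / 4
            * gg 2 (a * ((x : ℂ) ^ 2 - (z : ℂ) ^ 2) / 4) :=
        funext hdy
      rw [he]
      exact ((hasDerivAt_K_yy a (x : ℂ) (y : ℂ)).comp_ofReal).deriv
    rw [hxx, hyy, kernel_eq, ← ha, gg_ode (a * ((x : ℂ) ^ 2 - (y : ℂ) ^ 2) / 4)]
    ring
  · -- boundary condition
    intro x _
    have he : (fun z : ℝ => schrodingerKernel c x z)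
        = fun z : ℝ => -(a * (x : ℂ) / 2) * gg 1 (a * ((x : ℂ) ^ 2 - (z : ℂ) ^ 2) / 4) :=
      funext fun z => kernel_eq c x z
    rw [he]
    have h := ((hasDerivAt_K_y a (x : ℂ) ((0 : ℝ) : ℂ)).comp_ofReal).deriv
    rw [h]
    push_cast
    ring
  · -- diagonal condition
    intro x _
    rw [kernel_eq, ← ha]
    have : a * ((x : ℂ) ^ 2 - (x : ℂ) ^ 2) / 4 = 0 := by ring
    rw [this, gg_zero]
    norm_num [bb]
    ring
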